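/- Suppose φ, ψ ∈ A(D) are unit-norm and the Teichmüller geodesics they generate coincide, in the sense that for all s,t ∈ [0,1), λ(s\bar{φ}/|φ| − t\bar{ψ}/|ψ|) = |s − t|. Then φ = ψ almost everywhere. -/

import Mathlib

open MeasureTheory Complex

noncomputable section

/-- The open unit disk in ℂ. -/
def 𝔻 : Set ℂ := Metric.ball 0 1

/-- Planar Lebesgue measure restricted to the unit disk. -/
def vD : MeasureTheory.Measure ℂ := MeasureTheory.volume.restrict 𝔻

/-- `A(D)`: holomorphic on the disk and integrable there. -/
def AD (φ : ℂ → ℂ) : Prop := DifferentiableOn ℂ φ 𝔻 ∧ MeasureTheory.Integrable φ vD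

/-- L¹ norm over the disk. -/
def nrm (φ : ℂ → ℂ) : ℝ := ∫ z, ‖φ z‖ ∂vD

/-- Pairing Re ∫_D μ φ. -/
def pair (μ φ : ℂ → ℂ) : ℝ := (∫ z, μ z * φ z ∂vD).re

/-- Infinitesimal Teichmüller norm. -/
def lam (μ : ℂ → ℂ) : ℝ := sSup {r : ℝ | ∃ φ, AD φ ∧ nrm φ = 1 ∧ r = pair μ φ}

/-- Unit Teichmüller differential `conj φ / |φ|`. -/
def tmu (φ : ℂ → ℂ) (z : ℂ) : ℂ := (starRingEnd ℂ) (φ z) / ((‖φ z‖ : ℝ) : ℂ)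

/-- Cosine of the angle between geodesic directions. -/
def ang (φ ψ : ℂ → ℂ) : ℝ := (∫ z, tmu φ z * ψ z ∂vD).re

end

/-! Put `μ_φ = tmu φ`. For `s = t` the hypothesis gives `λ(s (μ_φ - μ_ψ)) = 0`; testing this
against `±ψ` yields `Re ∫ μ_φ ψ = ‖ψ‖₁`, and since `|μ_φ ψ| ≤ |ψ|` pointwise this forces
`μ_φ ψ = |ψ|`, i.e. `conj φ · ψ = |φ| |ψ|`, almost everywhere and then, by continuity, on all
of `D`. Near a point where `ψ ≠ 0` the quotient `φ / ψ` is therefore a real-valued holomorphic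
function, hence constant by the open mapping theorem, equal to some `c ≥ 0`. The identity
theorem gives `φ = c ψ` on `D`, and `‖φ‖₁ = ‖ψ‖₁` forces `c = 1`. -/

open Filter Topology Set

lemma norm_tmu_le (φ : ℂ → ℂ) (z : ℂ) : ‖tmu φ z‖ ≤ 1 := by
  by_cases h : φ z = 0 <;> simp [tmu, h]

lemma tmu_mul_norm (φ : ℂ → ℂ) (z : ℂ) : tmu φ z * ‖φ z‖ = starRingEnd ℂ (φ z) := by
  by_cases h : φ z = 0 <;> simp [tmu, h]

lemma tmu_mul_self (φ : ℂ → ℂ) (z : ℂ) : tmu φ z * φ z = ‖φ z‖ := by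
  rcases eq_or_ne (φ z) 0 with h | h
  · simp [tmu, h]
  · rw [tmu, div_mul_eq_mul_div, mul_comm, mul_conj, normSq_eq_norm_sq]
    field_simp [h]
    push_cast; ring

lemma re_tmu_mul_le (φ ψ : ℂ → ℂ) (z : ℂ) : (tmu φ z * ψ z).re ≤ ‖ψ z‖ :=
  calc (tmu φ z * ψ z).re ≤ ‖tmu φ z‖ * ‖ψ z‖ := by rw [← norm_mul]; exact re_le_norm _
    _ ≤ ‖ψ z‖ := mul_le_of_le_one_left (norm_nonneg _) (norm_tmu_le φ z)

lemma Complex.eq_ofReal_of_le_re_of_norm_le {w : ℂ} {r : ℝ} (hre : r ≤ w.re) (hn : ‖w‖ ≤ r) :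
    w = r := by
  have him : w.im = 0 :=
    abs_re_eq_norm.1 (le_antisymm (abs_re_le_norm w) (by linarith [le_abs_self w.re]))
  exact ext (by simp only [ofReal_re]; linarith [re_le_norm w]) (by simpa using him)

lemma Complex.div_eq_norm_of_conj_mul_eq {a b : ℂ} (h : starRingEnd ℂ a * b = ‖a‖ * ‖b‖) :
    a / b = ‖a / b‖ := by
  rcases eq_or_ne b 0 with hb | hb
  · simp [hb]
  have hb' : (‖b‖ : ℂ) ≠ 0 := by simpa using hb
  have key : a * ‖b‖ = ‖a‖ * b := by
    have h' : a * starRingEnd ℂ b = ‖a‖ * ‖b‖ := by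
      simpa [mul_comm] using congrArg (starRingEnd ℂ) h
    apply mul_right_cancel₀ hb'
    calc a * ‖b‖ * ‖b‖ = a * (starRingEnd ℂ b * b) := by
          rw [mul_comm (starRingEnd ℂ b), mul_conj, normSq_eq_norm_sq]; push_cast; ring
      _ = ‖a‖ * b * ‖b‖ := by linear_combination b * h'
  rw [norm_div, ofReal_div, div_eq_div_iff hb hb', key]

lemma aestronglyMeasurable_tmu {μ : Measure ℂ} {φ : ℂ → ℂ} (hφ : AEStronglyMeasurable φ μ) :
    AEStronglyMeasurable (tmu φ) μ := by
  have hmeas : Measurable fun w : ℂ => starRingEnd ℂ w / (‖w‖ : ℂ) := by fun_prop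
  exact (hmeas.comp_aemeasurable hφ.aemeasurable).aestronglyMeasurable

lemma integrable_tmu_mul {μ : Measure ℂ} {φ ψ : ℂ → ℂ} (hφ : AEStronglyMeasurable φ μ)
    (hψ : Integrable ψ μ) : Integrable (fun z => tmu φ z * ψ z) μ :=
  hψ.bdd_mul (aestronglyMeasurable_tmu hφ) (ae_of_all _ (norm_tmu_le φ))

lemma pair_le_nrm {μ χ : ℂ → ℂ} (hμ : ∀ z, ‖μ z‖ ≤ 1) (hχ : Integrable χ vD) :
    pair μ χ ≤ nrm χ :=
  calc pair μ χ ≤ ‖∫ z, μ z * χ z ∂vD‖ := re_le_norm _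
    _ ≤ ∫ z, ‖μ z * χ z‖ ∂vD := norm_integral_le_integral_norm _
    _ ≤ nrm χ := integral_mono_of_nonneg (ae_of_all _ fun z => norm_nonneg (μ z * χ z)) hχ.norm
        (ae_of_all _ fun z => by
          simpa only [norm_mul] using mul_le_of_le_one_left (norm_nonneg _) (hμ z))

lemma pair_neg_right (μ χ : ℂ → ℂ) : pair μ (fun z => -χ z) = -pair μ χ := by
  simp only [pair, mul_neg, integral_neg, neg_re]

lemma nrm_neg (χ : ℂ → ℂ) : nrm (fun z => -χ z) = nrm χ := by
  simp only [nrm, norm_neg]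

lemma abs_pair_le_lam {μ χ : ℂ → ℂ} (hμ : ∀ z, ‖μ z‖ ≤ 1) (hχ : AD χ) (hn : nrm χ = 1) :
    |pair μ χ| ≤ lam μ := by
  have hbdd : BddAbove {r : ℝ | ∃ φ, AD φ ∧ nrm φ = 1 ∧ r = pair μ φ} := by
    refine ⟨1, ?_⟩
    rintro r ⟨φ, hφ, hnφ, rfl⟩
    exact hnφ ▸ pair_le_nrm hμ hφ.2
  have hχneg : AD fun z => -χ z := ⟨hχ.1.neg, hχ.2.neg⟩
  refine abs_le'.2 ⟨le_csSup hbdd ⟨χ, hχ, hn, rfl⟩, ?_⟩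
  exact pair_neg_right μ χ ▸ le_csSup hbdd ⟨_, hχneg, (nrm_neg χ).trans hn, rfl⟩

lemma norm_mul_tmu_sub_mul_tmu_le {s : ℝ} (hs : |s| ≤ 1 / 2) (φ ψ : ℂ → ℂ) (z : ℂ) :
    ‖(s : ℂ) * tmu φ z - (s : ℂ) * tmu ψ z‖ ≤ 1 :=
  calc ‖(s : ℂ) * tmu φ z - (s : ℂ) * tmu ψ z‖ ≤ |s| * ‖tmu φ z‖ + |s| * ‖tmu ψ z‖ := by
        simpa only [norm_mul, norm_real, Real.norm_eq_abs] using
          norm_sub_le ((s : ℂ) * tmu φ z) ((s : ℂ) * tmu ψ z)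
    _ ≤ 1 / 2 * 1 + 1 / 2 * 1 := by
        gcongr
        exacts [norm_tmu_le φ z, norm_tmu_le ψ z]
    _ = 1 := by norm_num

lemma pair_mul_tmu_sub_mul_tmu {φ ψ : ℂ → ℂ} (hφ : AEStronglyMeasurable φ vD)
    (hψ : Integrable ψ vD) (s : ℝ) :
    pair (fun z => (s : ℂ) * tmu φ z - (s : ℂ) * tmu ψ z) ψ = s * (ang φ ψ - nrm ψ) := by
  have hsplit : (fun z => ((s : ℂ) * tmu φ z - (s : ℂ) * tmu ψ z) * ψ z)
      = fun z => (s : ℂ) * (tmu φ z * ψ z) - (s : ℂ) * (tmu ψ z * ψ z) := by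
    funext z; ring
  have hself : ∫ z, tmu ψ z * ψ z ∂vD = (nrm ψ : ℂ) := by
    simp only [tmu_mul_self, nrm]
    exact integral_ofReal
  rw [pair, hsplit, integral_sub ((integrable_tmu_mul hφ hψ).const_mul _)
    ((integrable_tmu_mul hψ.aestronglyMeasurable hψ).const_mul _), integral_const_mul,
    integral_const_mul, hself, ang, sub_re, re_ofReal_mul, re_ofReal_mul,
    ofReal_re, mul_sub]

lemma tmu_mul_ae_eq_norm_of_ang_eq_nrm {φ ψ : ℂ → ℂ} (hφ : AEStronglyMeasurable φ vD)
    (hψ : Integrable ψ vD) (hang : ang φ ψ = nrm ψ) :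
    ∀ᵐ z ∂vD, tmu φ z * ψ z = ‖ψ z‖ := by
  have hint := integrable_tmu_mul hφ hψ
  have hint_re : Integrable (fun z => (tmu φ z * ψ z).re) vD := hint.re
  have hgap : ∫ z, (‖ψ z‖ - (tmu φ z * ψ z).re) ∂vD = 0 := by
    have hre : ∫ z, (tmu φ z * ψ z).re ∂vD = ang φ ψ := integral_re hint
    rw [integral_sub hψ.norm hint_re, hre, hang, nrm, sub_self]
  have hae := (integral_eq_zero_iff_of_nonneg
    (fun z => sub_nonneg.2 (re_tmu_mul_le φ ψ z)) (hψ.norm.sub hint_re)).1 hgap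
  filter_upwards [hae] with z hz
  have hre : ‖ψ z‖ ≤ (tmu φ z * ψ z).re := by simp only [Pi.zero_apply] at hz; linarith
  refine eq_ofReal_of_le_re_of_norm_le hre ?_
  rw [norm_mul]
  exact mul_le_of_le_one_left (norm_nonneg _) (norm_tmu_le φ z)

lemma Complex.setOf_im_eq_zero_notMem_nhds (w : ℂ) : {z : ℂ | z.im = 0} ∉ 𝓝 w := by
  intro hw
  have hint := interior_mem_nhds.2 hw
  rw [show {z : ℂ | z.im = 0} = im ⁻¹' {0} from rfl, interior_preimage_im,
    interior_singleton, preimage_empty] at hint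
  exact (nhds_neBot (x := w)).ne (empty_mem_iff_bot.1 hint)

lemma AnalyticAt.eventually_eq_of_eventually_im_eq_zero {E : Type*} [NormedAddCommGroup E]
    [NormedSpace ℂ E] {f : E → ℂ} {z₀ : E} (hf : AnalyticAt ℂ f z₀)
    (him : ∀ᶠ z in 𝓝 z₀, (f z).im = 0) : ∀ᶠ z in 𝓝 z₀, f z = f z₀ := by
  refine hf.eventually_constant_or_nhds_le_map_nhds.resolve_right fun hopen => ?_
  exact setOf_im_eq_zero_notMem_nhds (f z₀) (hopen him)

lemma exists_mem_disk_ne_zero_of_nrm_ne_zero {ψ : ℂ → ℂ} (hψ : nrm ψ ≠ 0) :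
    ∃ z ∈ 𝔻, ψ z ≠ 0 := by
  by_contra! h
  exact hψ (setIntegral_eq_zero_of_forall_eq_zero fun z hz => by simp [h z hz])

lemma nrm_const_mul_of_eqOn {φ ψ : ℂ → ℂ} {c : ℂ} (h : EqOn φ (fun z => c * ψ z) 𝔻) :
    nrm φ = ‖c‖ * nrm ψ := by
  rw [nrm, nrm, ← integral_const_mul]
  exact setIntegral_congr_fun measurableSet_ball fun z hz => by simp [h hz]

lemma eqOn_norm_div_mul_of_conj_mul_eq {φ ψ : ℂ → ℂ} (hφ : DifferentiableOn ℂ φ 𝔻)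
    (hψ : DifferentiableOn ℂ ψ 𝔻)
    (hrel : EqOn (fun z => starRingEnd ℂ (φ z) * ψ z) (fun z => (‖φ z‖ * ‖ψ z‖ : ℂ)) 𝔻)
    {z₀ : ℂ} (hz₀ : z₀ ∈ 𝔻) (hψz₀ : ψ z₀ ≠ 0) :
    EqOn φ (fun z => (‖φ z₀ / ψ z₀‖ : ℂ) * ψ z) 𝔻 := by
  have h𝔻 : 𝔻 ∈ 𝓝 z₀ := Metric.isOpen_ball.mem_nhds hz₀
  have hquot : AnalyticAt ℂ (fun z => φ z / ψ z) z₀ :=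
    ((hφ.analyticOnNhd Metric.isOpen_ball) z₀ hz₀).div
      ((hψ.analyticOnNhd Metric.isOpen_ball) z₀ hz₀) hψz₀
  have hreal : ∀ z ∈ 𝔻, φ z / ψ z = ‖φ z / ψ z‖ := fun z hz =>
    div_eq_norm_of_conj_mul_eq (hrel hz)
  have hconst : ∀ᶠ z in 𝓝 z₀, φ z / ψ z = φ z₀ / ψ z₀ :=
    hquot.eventually_eq_of_eventually_im_eq_zero <| Filter.mem_of_superset h𝔻 fun z hz =>
      show (φ z / ψ z).im = 0 by rw [hreal z hz, ofReal_im]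
  have hψne : ∀ᶠ z in 𝓝 z₀, ψ z ≠ 0 := (hψ.continuousOn.continuousAt h𝔻).eventually_ne hψz₀
  refine (hφ.analyticOnNhd Metric.isOpen_ball).eqOn_of_preconnected_of_eventuallyEq
    (analyticOnNhd_const.mul (hψ.analyticOnNhd Metric.isOpen_ball))
    (convex_ball (0 : ℂ) 1).isPreconnected hz₀ ?_
  filter_upwards [hconst, hψne] with z hz hψz
  rw [← hreal z₀ hz₀, ← hz, div_mul_cancel₀ _ hψz]

lemma eqOn_of_ae_conj_mul_eq_norm_mul_norm {φ ψ : ℂ → ℂ} (hφ : AD φ) (hψ : AD ψ)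
    (hnφ : nrm φ = 1) (hnψ : nrm ψ = 1)
    (hrel : ∀ᵐ z ∂vD, starRingEnd ℂ (φ z) * ψ z = ‖φ z‖ * ‖ψ z‖) :
    EqOn φ ψ 𝔻 := by
  have hrel' : EqOn (fun z => starRingEnd ℂ (φ z) * ψ z) (fun z => (‖φ z‖ * ‖ψ z‖ : ℂ)) 𝔻 :=
    Measure.eqOn_open_of_ae_eq hrel Metric.isOpen_ball
      ((continuous_conj.comp_continuousOn hφ.1.continuousOn).mul hψ.1.continuousOn)
      ((continuous_ofReal.comp_continuousOn hφ.1.continuousOn.norm).mul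
        (continuous_ofReal.comp_continuousOn hψ.1.continuousOn.norm))
  obtain ⟨z₀, hz₀, hψz₀⟩ := exists_mem_disk_ne_zero_of_nrm_ne_zero (hnψ ▸ one_ne_zero)
  have hEq := eqOn_norm_div_mul_of_conj_mul_eq hφ.1 hψ.1 hrel' hz₀ hψz₀
  have hc : ‖φ z₀ / ψ z₀‖ = 1 := by
    simpa only [hnφ, hnψ, mul_one, norm_real, norm_norm] using
      (nrm_const_mul_of_eqOn hEq).symm
  intro z hz
  simp only [hEq hz, hc, ofReal_one, one_mul]

/-- if the two Teichmüller geodesics coincide infinitesimally, φ = ψ a.e. -/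
theorem stmt10 (φ ψ : ℂ → ℂ) (hφ : AD φ) (hψ : AD ψ)
    (hnφ : nrm φ = 1) (hnψ : nrm ψ = 1)
    (h : ∀ s t : ℝ, 0 ≤ s → s < 1 → 0 ≤ t → t < 1 →
      lam (fun z => (s : ℂ) * tmu φ z - (t : ℂ) * tmu ψ z) = |s - t|) :
    ∀ᵐ z ∂vD, φ z = ψ z := by
  have hlam : lam (fun z => ((1 / 2 : ℝ) : ℂ) * tmu φ z - ((1 / 2 : ℝ) : ℂ) * tmu ψ z) = 0 := by
    simpa only [sub_self, abs_zero] using h (1 / 2) (1 / 2) (by norm_num) (by norm_num)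
      (by norm_num) (by norm_num)
  have hpair := abs_pair_le_lam (norm_mul_tmu_sub_mul_tmu_le (s := 1 / 2) (by norm_num) φ ψ) hψ hnψ
  rw [hlam, pair_mul_tmu_sub_mul_tmu hφ.2.aestronglyMeasurable hψ.2, abs_nonpos_iff,
    mul_eq_zero, sub_eq_zero] at hpair
  have hang : ang φ ψ = nrm ψ := hpair.resolve_left (by norm_num)
  have hrel : ∀ᵐ z ∂vD, starRingEnd ℂ (φ z) * ψ z = ‖φ z‖ * ‖ψ z‖ := by
    filter_upwards [tmu_mul_ae_eq_norm_of_ang_eq_nrm hφ.2.aestronglyMeasurable hψ.2 hang]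
      with z hz
    rw [← tmu_mul_norm, mul_right_comm, hz, mul_comm]
  filter_upwards [ae_restrict_mem measurableSet_ball] with z hz
  exact eqOn_of_ae_conj_mul_eq_norm_mul_norm hφ hψ hnφ hnψ hrel hz
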